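/- Let A, B ∈ ℝ^{n×n}. Suppose that for every non-zero positive semi-definite 2n×2n matrix H = [[H11,H12],[H12^T,H22]] with diag(H11) ≥ diag(H22), the matrix A H11 + B H12^T has a negative diagonal entry. Then there exist diagonal positive definite matrices P, Q with A^T P + P A + Q + P B Q^{-1} B^T P ≺ 0. -/

import Mathlib

/-!
By the Schur complement it suffices to find `p, q > 0` with `L(p, q) ≺ 0`, where
`L(p, q) = [[Aᵀ P + P A + Q, P B], [Bᵀ P, -Q]]` is `riccatiBlock A B (p, q)`. Let `K` be the convex
cone generated by the `L(p, q)` with `p, q ≥ 0` and by the positive semidefinite matrices, and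
`X₀ = -(1 + L(1, 1))`. If `X₀` lies in the closure of `K`, some `L(p, q) + S` is entrywise close to
`X₀`, and then `L(p + 1, q + 1) = -1 - S + (L(p, q) + S - X₀) ≺ 0`. Otherwise Farkas' lemma gives a
functional, represented in the trace pairing by a symmetric `H`, that is nonnegative on `K` and
negative at `X₀`. Nonnegativity on the rank-one matrices `x xᵀ` makes `H ⪰ 0`, negativity at `X₀`
makes `H ≠ 0`, and nonnegativity at `L(eᵢ, 0)` and `L(0, eᵢ)` gives `(A H₁₁ + B H₁₂ᵀ)ᵢᵢ ≥ 0` and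
`(H₂₂)ᵢᵢ ≤ (H₁₁)ᵢᵢ` for every `i`, contradicting the hypothesis.
-/

open Matrix
open scoped MatrixOrder

attribute [local instance] Matrix.normedAddCommGroup

section Schur
open scoped ComplexOrder
variable {m n 𝕜 : Type*} [RCLike 𝕜] [Fintype m] [Fintype n] [DecidableEq m] [DecidableEq n]

theorem Matrix.PosDef.schurComplement₂₂ {A : Matrix m m 𝕜} {B : Matrix m n 𝕜} {D : Matrix n n 𝕜}
    (hD : D.PosDef) (h : (fromBlocks A B Bᴴ D).PosDef) : (A - B * D⁻¹ * Bᴴ).PosDef := by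
  have := hD.isUnit.invertible
  have hpsd : (A - B * D⁻¹ * Bᴴ).PosSemidef := (PosDef.fromBlocks₂₂ A B hD).mp h.posSemidef
  rw [hpsd.posDef_iff_isUnit, isUnit_iff_isUnit_det]
  have hdet := (isUnit_iff_isUnit_det _).mp h.isUnit
  rw [det_fromBlocks₂₂, invOf_eq_nonsing_inv] at hdet
  exact isUnit_of_mul_isUnit_right hdet

end Schur

theorem Matrix.trace_fromBlocks {m n α : Type*} [Fintype m] [Fintype n] [AddCommMonoid α]
    (A : Matrix m m α) (B : Matrix m n α) (C : Matrix n m α) (D : Matrix n n α) :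
    trace (fromBlocks A B C D) = trace A + trace D := by
  simp [trace, Fintype.sum_sum_type]

theorem Matrix.exists_isHermitian_trace_mul_eq {ι : Type*} [Fintype ι] [DecidableEq ι]
    (f : Matrix ι ι ℝ →ₗ[ℝ] ℝ) :
    ∃ G : Matrix ι ι ℝ, G.IsHermitian ∧
      ∀ M : Matrix ι ι ℝ, M.IsHermitian → f M = trace (M * G) := by
  set H : Matrix ι ι ℝ := of fun i j => f (single j i 1)
  have hH (M : Matrix ι ι ℝ) : f M = trace (M * H) := by
    conv_lhs => rw [matrix_eq_sum_single M]
    simp only [map_sum, trace, diag, mul_apply, H, of_apply]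
    refine Finset.sum_congr rfl fun i _ => Finset.sum_congr rfl fun j _ => ?_
    have := map_smul f (M i j) (single i j (1 : ℝ))
    rwa [smul_single, smul_eq_mul, mul_one] at this
  refine ⟨(1 / 2 : ℝ) • (H + Hᵀ), ?_, fun M hM => ?_⟩
  · simp [IsHermitian, conjTranspose_eq_transpose_of_trivial, add_comm]
  · have hMt : trace (M * Hᵀ) = trace (M * H) := by
      rw [← trace_transpose, transpose_mul, transpose_transpose,
        ← conjTranspose_eq_transpose_of_trivial, hM.eq, trace_mul_comm]
    rw [Matrix.mul_smul, trace_smul, Matrix.mul_add, trace_add, hMt, hH, smul_eq_mul]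
    ring

theorem Matrix.dotProduct_mulVec_le_card_mul_norm {ι : Type*} [Fintype ι] (E : Matrix ι ι ℝ)
    (x : ι → ℝ) : x ⬝ᵥ E *ᵥ x ≤ Fintype.card ι * ‖E‖ * (x ⬝ᵥ x) := by
  calc x ⬝ᵥ E *ᵥ x = ∑ k, ∑ l, x k * E k l * x l := by
        simp only [dotProduct, mulVec, Finset.mul_sum, mul_assoc]
    _ ≤ ∑ k, ∑ l, ‖E‖ * (|x k| * |x l|) := by
        refine Finset.sum_le_sum fun k _ => Finset.sum_le_sum fun l _ => ?_
        calc x k * E k l * x l ≤ |x k * E k l * x l| := le_abs_self _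
          _ = ‖E k l‖ * (|x k| * |x l|) := by rw [abs_mul, abs_mul, Real.norm_eq_abs]; ring
          _ ≤ ‖E‖ * (|x k| * |x l|) := by gcongr; exact norm_entry_le_entrywise_sup_norm E
    _ = ‖E‖ * (∑ k, |x k|) ^ 2 := by
        simp only [← Finset.mul_sum, sq, Finset.sum_mul_sum]
    _ ≤ ‖E‖ * (Fintype.card ι * ∑ k, |x k| ^ 2) := by
        gcongr
        exact sq_sum_le_card_mul_sum_sq
    _ = Fintype.card ι * ‖E‖ * (x ⬝ᵥ x) := by
        simp only [sq_abs]
        simp only [dotProduct, sq]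
        ring

section RiccatiCone
variable {ι : Type*} [Fintype ι] [DecidableEq ι] (A B : Matrix ι ι ℝ)

noncomputable def riccatiBlock : (ι → ℝ) × (ι → ℝ) →ₗ[ℝ] Matrix (ι ⊕ ι) (ι ⊕ ι) ℝ where
  toFun pq := fromBlocks (Aᵀ * diagonal pq.1 + diagonal pq.1 * A + diagonal pq.2)
    (diagonal pq.1 * B) (Bᵀ * diagonal pq.1) (-diagonal pq.2)
  map_add' _ _ := by
    have diagonal_add' (d d' : ι → ℝ) : diagonal (d + d') = diagonal d + diagonal d' :=
      (diagonal_add d d').symm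
    simp only [Prod.fst_add, Prod.snd_add, diagonal_add', Matrix.mul_add, Matrix.add_mul,
      fromBlocks_add, neg_add]
    congr 1
    abel
  map_smul' _ _ := by
    simp only [Prod.smul_fst, Prod.smul_snd, diagonal_smul, Matrix.mul_smul, Matrix.smul_mul,
      fromBlocks_smul, smul_add, smul_neg, RingHom.id_apply]

noncomputable def riccatiCone : PointedCone ℝ (Matrix (ι ⊕ ι) (ι ⊕ ι) ℝ) :=
  (PointedCone.positive ℝ _).map (riccatiBlock A B) ⊔ PointedCone.positive ℝ _

theorem riccatiBlock_isHermitian (pq : (ι → ℝ) × (ι → ℝ)) : (riccatiBlock A B pq).IsHermitian := by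
  refine IsHermitian.fromBlocks ?_ ?_ ?_ <;>
    simp [IsHermitian, conjTranspose_eq_transpose_of_trivial, transpose_mul, add_comm]

theorem posDef_neg_riccati_of_posDef_neg_riccatiBlock {p q : ι → ℝ} (hq : ∀ i, 0 < q i)
    (h : (-riccatiBlock A B (p, q)).PosDef) :
    (-(Aᵀ * diagonal p + diagonal p * A + diagonal q +
      diagonal p * B * (diagonal q)⁻¹ * Bᵀ * diagonal p)).PosDef := by
  have hblock : -riccatiBlock A B (p, q) =
      fromBlocks (-(Aᵀ * diagonal p + diagonal p * A + diagonal q))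
        (-(diagonal p * B)) (-(diagonal p * B))ᴴ (diagonal q) := by
    simp [riccatiBlock, fromBlocks_neg, conjTranspose_eq_transpose_of_trivial, transpose_mul]
  have hschur : -(Aᵀ * diagonal p + diagonal p * A + diagonal q +
      diagonal p * B * (diagonal q)⁻¹ * Bᵀ * diagonal p) =
      -(Aᵀ * diagonal p + diagonal p * A + diagonal q) -
        -(diagonal p * B) * (diagonal q)⁻¹ * (-(diagonal p * B))ᴴ := by
    simp only [Matrix.mul_assoc, neg_add_rev, neg_mul, conjTranspose_eq_transpose_of_trivial,
      transpose_neg, transpose_mul, diagonal_transpose, mul_neg, neg_neg]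
    abel
  rw [hschur]
  exact (PosDef.diagonal hq).schurComplement₂₂ (hblock ▸ h)

theorem trace_riccatiBlock_mul_fromBlocks {G₁₁ G₁₂ G₂₂ : Matrix ι ι ℝ} (h₁₁ : G₁₁ᵀ = G₁₁)
    (p q : ι → ℝ) :
    trace (riccatiBlock A B (p, q) * fromBlocks G₁₁ G₁₂ G₁₂ᵀ G₂₂) =
      2 * trace (diagonal p * (A * G₁₁ + B * G₁₂ᵀ)) + trace (diagonal q * (G₁₁ - G₂₂)) := by
  have hA : trace (Aᵀ * (diagonal p * G₁₁)) = trace (diagonal p * (A * G₁₁)) := by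
    rw [← trace_transpose, transpose_mul, transpose_mul, transpose_transpose, h₁₁,
      diagonal_transpose]
    simp only [← Matrix.mul_assoc]
    exact (trace_mul_cycle (diagonal p) A G₁₁).symm
  have hB : trace (Bᵀ * (diagonal p * G₁₂)) = trace (diagonal p * (B * G₁₂ᵀ)) := by
    rw [← trace_transpose, transpose_mul, transpose_mul, transpose_transpose,
      diagonal_transpose]
    simp only [← Matrix.mul_assoc]
    exact (trace_mul_cycle (diagonal p) B G₁₂ᵀ).symm
  simp only [riccatiBlock, LinearMap.coe_mk, AddHom.coe_mk, fromBlocks_multiply, trace_fromBlocks,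
    Matrix.add_mul, trace_add, hA, hB, Matrix.neg_mul, trace_neg, Matrix.mul_add, Matrix.mul_sub,
    trace_sub, Matrix.mul_assoc]
  ring

theorem diag_le_and_nonneg_of_trace_riccatiBlock_mul_nonneg {G₁₁ G₁₂ G₂₂ : Matrix ι ι ℝ}
    (h₁₁ : G₁₁ᵀ = G₁₁)
    (h : ∀ pq, 0 ≤ pq → 0 ≤ trace (riccatiBlock A B pq * fromBlocks G₁₁ G₁₂ G₁₂ᵀ G₂₂)) :
    (∀ i, G₂₂ i i ≤ G₁₁ i i) ∧ ∀ i, 0 ≤ (A * G₁₁ + B * G₁₂ᵀ) i i := by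
  have htrace (i : ι) (M : Matrix ι ι ℝ) : trace (diagonal (Pi.single i 1) * M) = M i i := by
    simp [trace, diagonal_mul, Pi.single_apply]
  refine ⟨fun i => ?_, fun i => ?_⟩
  · have := h (0, Pi.single i 1) (by simp [Prod.le_def])
    simpa [trace_riccatiBlock_mul_fromBlocks A B h₁₁, htrace] using this
  · have := h (Pi.single i 1, 0) (by simp [Prod.le_def])
    simpa [trace_riccatiBlock_mul_fromBlocks A B h₁₁, htrace] using this

theorem exists_dual_certificate_of_notMem_closure
    (hx : -(1 + riccatiBlock A B 1) ∉ closure (riccatiCone A B : Set (Matrix (ι ⊕ ι) (ι ⊕ ι) ℝ))) :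
    ∃ G₁₁ G₁₂ G₂₂ : Matrix ι ι ℝ, (fromBlocks G₁₁ G₁₂ G₁₂ᵀ G₂₂).PosSemidef ∧
      fromBlocks G₁₁ G₁₂ G₁₂ᵀ G₂₂ ≠ 0 ∧ (∀ i, G₂₂ i i ≤ G₁₁ i i) ∧
      ∀ i, 0 ≤ (A * G₁₁ + B * G₁₂ᵀ) i i := by
  -- the `Pi` instance is not found through the `Matrix` type synonym
  have : LocallyConvexSpace ℝ (Matrix (ι ⊕ ι) (ι ⊕ ι) ℝ) :=
    inferInstanceAs (LocallyConvexSpace ℝ (ι ⊕ ι → ι ⊕ ι → ℝ))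
  obtain ⟨f, hf, hfx⟩ :=
    ProperCone.hyperplane_separation_point (Submodule.closure (riccatiCone A B)) hx
  have hfK (M) (hM : M ∈ riccatiCone A B) : 0 ≤ f M := hf M (subset_closure hM)
  obtain ⟨G, hG, hfG⟩ : ∃ G : Matrix (ι ⊕ ι) (ι ⊕ ι) ℝ, G.IsHermitian ∧
      ∀ M, M.IsHermitian → f M = trace (M * G) :=
    exists_isHermitian_trace_mul_eq f.toLinearMap
  have hGpsd : G.PosSemidef := by
    refine PosSemidef.of_dotProduct_mulVec_nonneg hG fun x => ?_
    have hxx := posSemidef_vecMulVec_self_star x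
    have := hfK _ (Submodule.mem_sup_right (nonneg_iff_posSemidef.2 hxx))
    rwa [hfG _ hxx.isHermitian, vecMulVec_mul, trace_vecMulVec, dotProduct_comm,
      ← dotProduct_mulVec] at this
  have hG0 : G ≠ 0 := by
    rintro rfl
    have := hfG _ (isHermitian_one.add (riccatiBlock_isHermitian A B 1)).neg
    simp_all
  have hGblocks : fromBlocks G.toBlocks₁₁ G.toBlocks₁₂ G.toBlocks₁₂ᵀ G.toBlocks₂₂ = G := by
    conv_rhs => rw [← fromBlocks_toBlocks G]
    congr
    ext i j
    simpa [toBlocks₁₂, toBlocks₂₁] using hG.apply (Sum.inr j) (Sum.inl i)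
  have h₁₁ : G.toBlocks₁₁ᵀ = G.toBlocks₁₁ := by
    ext i j
    simpa [toBlocks₁₁] using hG.apply (Sum.inl i) (Sum.inl j)
  refine ⟨_, _, _, hGblocks ▸ hGpsd, hGblocks ▸ hG0,
    diag_le_and_nonneg_of_trace_riccatiBlock_mul_nonneg A B h₁₁ fun pq hpq => ?_⟩
  rw [hGblocks, ← hfG _ (riccatiBlock_isHermitian A B pq)]
  exact hfK _ (Submodule.mem_sup_left (PointedCone.mem_map.2 ⟨pq, hpq, rfl⟩))

theorem exists_posDef_neg_riccatiBlock_of_mem_closure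
    (hx : -(1 + riccatiBlock A B 1) ∈ closure (riccatiCone A B : Set (Matrix (ι ⊕ ι) (ι ⊕ ι) ℝ))) :
    ∃ p q : ι → ℝ, (∀ i, 0 < p i) ∧ (∀ i, 0 < q i) ∧ (-riccatiBlock A B (p, q)).PosDef := by
  set c : ℝ := (Fintype.card (ι ⊕ ι) : ℝ)
  obtain ⟨v, hv, hdist⟩ := Metric.mem_closure_iff.mp hx (1 / (c + 1)) (by positivity)
  obtain ⟨_, ⟨⟨p, q⟩, hpq, rfl⟩, S, hS, rfl⟩ := Submodule.mem_sup.mp hv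
  refine ⟨p + 1, q + 1, fun i => by simpa using add_pos_of_nonneg_of_pos (hpq.1 i) one_pos,
    fun i => by simpa using add_pos_of_nonneg_of_pos (hpq.2 i) one_pos, ?_⟩
  set E := riccatiBlock A B (p, q) + S - -(1 + riccatiBlock A B 1)
  have hE : c * ‖E‖ < 1 := by
    have : ‖E‖ * (c + 1) < 1 := by
      rwa [dist_comm, dist_eq_norm, lt_div_iff₀ (by positivity)] at hdist
    nlinarith [norm_nonneg E]
  have hL : -riccatiBlock A B (p + 1, q + 1) = 1 + S - E := by
    rw [show (p + 1, q + 1) = (p, q) + 1 from rfl, map_add]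
    simp only [E]
    abel
  have hherm := (riccatiBlock_isHermitian A B (p + 1, q + 1)).neg
  rw [hL] at hherm ⊢
  refine PosDef.of_dotProduct_mulVec_pos hherm fun x hx0 => ?_
  have h1 : 0 < x ⬝ᵥ x := by simpa using dotProduct_star_self_pos_iff.2 hx0
  have h2 : 0 ≤ x ⬝ᵥ S *ᵥ x := by simpa using hS.dotProduct_mulVec_nonneg x
  have h3 := dotProduct_mulVec_le_card_mul_norm E x
  simp only [star_trivial, sub_mulVec, add_mulVec, one_mulVec, dotProduct_sub, dotProduct_add]
  nlinarith

end RiccatiCone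

theorem diag_riccati_sufficient (n : ℕ) (A B : Matrix (Fin n) (Fin n) ℝ)
    (h : ∀ H11 H12 H22 : Matrix (Fin n) (Fin n) ℝ,
      (Matrix.fromBlocks H11 H12 H12ᵀ H22).PosSemidef →
      Matrix.fromBlocks H11 H12 H12ᵀ H22 ≠ 0 →
      (∀ i, H22 i i ≤ H11 i i) →
      ∃ i, (A * H11 + B * H12ᵀ) i i < 0) :
    ∃ p q : Fin n → ℝ, (∀ i, 0 < p i) ∧ (∀ i, 0 < q i) ∧
      (-(Aᵀ * Matrix.diagonal p + Matrix.diagonal p * A + Matrix.diagonal q +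
        Matrix.diagonal p * B * (Matrix.diagonal q)⁻¹ * Bᵀ * Matrix.diagonal p)).PosDef := by
  by_cases hx : -(1 + riccatiBlock A B 1) ∈ closure (riccatiCone A B : Set _)
  · obtain ⟨p, q, hp, hq, hL⟩ := exists_posDef_neg_riccatiBlock_of_mem_closure A B hx
    exact ⟨p, q, hp, hq, posDef_neg_riccati_of_posDef_neg_riccatiBlock A B hq hL⟩
  · obtain ⟨G₁₁, G₁₂, G₂₂, hG, hG0, hdiag, hnonneg⟩ :=
      exists_dual_certificate_of_notMem_closure A B hx
    obtain ⟨i, hi⟩ := h G₁₁ G₁₂ G₂₂ hG hG0 hdiag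
    exact absurd hi (hnonneg i).not_gt
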